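/- Let K be an algebraically closed field, r_i, s_i ∈ K× with r_i^2 ≠ s_i^2 for each i, and μ, ν ∈ (K×)^n with ν_i ≠ ±r_i s_i^{-1} μ_i for all i. On Z(μ,ν) = ⨁_{k ∈ ℤ^n} K z(k), define ρ_i z(k) = r_i^{k_i} μ_i z(k), σ_i z(k) = s_i^{k_i} ν_i z(k), x_i z(k) = z(k+ε_i), y_i z(k) = ((r_i^{2k_i}μ_i^2 − s_i^{2k_i}ν_i^2)/(r_i^2 − s_i^2)) z(k−ε_i). Then these operators satisfy the defining relations (R1)–(R5) of A_{r,s}(n), so Z(μ,ν) is an A_{r,s}(n)-module. -/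

import Mathlib

/-- Build a linear operator on `ι →₀ K` from its values on the basis. -/
noncomputable def mkOp {K : Type*} [Field K] {ι : Type*} (f : ι → (ι →₀ K)) :
    (ι →₀ K) →ₗ[K] (ι →₀ K) :=
  Finsupp.lsum K fun k => LinearMap.toSpanSingleton K (ι →₀ K) (f k)

section ops
variable {K : Type*} [Field K] {n : ℕ}

/-- `ρ_i z(k) = r_i^{k_i} μ_i z(k)` (and `σ_i` by substituting `s, ν`). -/
noncomputable def rhoZOp (r mu : Fin n → K) (i : Fin n) :
    ((Fin n → ℤ) →₀ K) →ₗ[K] ((Fin n → ℤ) →₀ K) :=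
  mkOp fun k => Finsupp.single k (r i ^ k i * mu i)

/-- inverse of `rhoZOp`. -/
noncomputable def rhoZInvOp (r mu : Fin n → K) (i : Fin n) :
    ((Fin n → ℤ) →₀ K) →ₗ[K] ((Fin n → ℤ) →₀ K) :=
  mkOp fun k => Finsupp.single k ((r i ^ k i * mu i)⁻¹)

/-- `x_i z(k) = z(k + ε_i)`. -/
noncomputable def xZOp (i : Fin n) :
    ((Fin n → ℤ) →₀ K) →ₗ[K] ((Fin n → ℤ) →₀ K) :=
  mkOp fun k => Finsupp.single (Function.update k i (k i + 1)) (1 : K)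

/-- `y_i z(k) = ((r_i^{2k_i}μ_i² - s_i^{2k_i}ν_i²)/(r_i² - s_i²)) z(k - ε_i)`. -/
noncomputable def yZOp (r s mu nu : Fin n → K) (i : Fin n) :
    ((Fin n → ℤ) →₀ K) →ₗ[K] ((Fin n → ℤ) →₀ K) :=
  mkOp fun k => ((r i ^ (2 * k i) * mu i ^ 2 - s i ^ (2 * k i) * nu i ^ 2) /
      (r i ^ 2 - s i ^ 2)) •
    Finsupp.single (Function.update k i (k i - 1)) (1 : K)

end ops


/-! On the basis `z(k)` each `ρ_i`, `σ_i` acts diagonally and `x_i`, `y_i` shift the `i`-th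
coordinate of `k`, so every relation reduces to an identity between scalars at a single basis
vector. The only non-formal one is (R5): with `c(m) = (r^{2m} μ^2 - s^{2m} ν^2) / (r^2 - s^2)`
the coefficient of `y`, one has `c(m+1) - r^2 c(m) = (s^m ν)^2`, and since `c` is symmetric under
`(r, μ) ↔ (s, ν)` also `c(m+1) - s^2 c(m) = (r^m μ)^2`. -/

theorem mkOp_single {K : Type*} [Field K] {ι : Type*} (f : ι → (ι →₀ K)) (k : ι) (c : K) :
    mkOp f (Finsupp.single k c) = c • f k := by
  simp [mkOp, LinearMap.toSpanSingleton]

section Coeff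
variable {K : Type*} [Field K]

/-- `y_i z(k) = yCoeff (r i) (s i) (μ i) (ν i) (k i) • z(k - ε_i)`. -/
def yCoeff (a b c d : K) (m : ℤ) : K :=
  (a ^ (2 * m) * c ^ 2 - b ^ (2 * m) * d ^ 2) / (a ^ 2 - b ^ 2)

theorem yCoeff_comm (a b c d : K) (m : ℤ) : yCoeff a b c d m = yCoeff b a d c m := by
  rw [yCoeff, yCoeff, ← neg_div_neg_eq, neg_sub, neg_sub]

theorem yCoeff_add_one_sub {a b : K} (ha : a ≠ 0) (hb : b ≠ 0) (hab : a ^ 2 ≠ b ^ 2)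
    (c d : K) (m : ℤ) :
    yCoeff a b c d (m + 1) - a ^ 2 * yCoeff a b c d m = b ^ m * d * (b ^ m * d) := by
  have hden : a ^ 2 - b ^ 2 ≠ 0 := sub_ne_zero.2 hab
  have hdouble : ∀ {t : K}, t ≠ 0 → t ^ (2 * m) = t ^ m * t ^ m := fun ht => by
    rw [two_mul, zpow_add₀ ht]
  have hsucc : ∀ {t : K}, t ≠ 0 → t ^ (2 * (m + 1)) = t ^ m * t ^ m * t ^ 2 := fun ht => by
    rw [mul_add, mul_one, zpow_add₀ ht, hdouble ht, zpow_ofNat]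
  rw [yCoeff, yCoeff, hsucc ha, hsucc hb, hdouble ha, hdouble hb]
  field_simp
  ring

end Coeff

section Operators
variable {K : Type*} [Field K] {n : ℕ}

theorem rhoZOp_single (a b : Fin n → K) (i : Fin n) (k : Fin n → ℤ) (c : K) :
    rhoZOp a b i (Finsupp.single k c) = Finsupp.single k (c * (a i ^ k i * b i)) := by
  rw [rhoZOp, mkOp_single, Finsupp.smul_single, smul_eq_mul]

theorem rhoZInvOp_single (a b : Fin n → K) (i : Fin n) (k : Fin n → ℤ) (c : K) :
    rhoZInvOp a b i (Finsupp.single k c) = Finsupp.single k (c * (a i ^ k i * b i)⁻¹) := by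
  rw [rhoZInvOp, mkOp_single, Finsupp.smul_single, smul_eq_mul]

theorem xZOp_single (i : Fin n) (k : Fin n → ℤ) (c : K) :
    xZOp i (Finsupp.single k c) = Finsupp.single (Function.update k i (k i + 1)) c := by
  rw [xZOp, mkOp_single, Finsupp.smul_single, smul_eq_mul, mul_one]

theorem yZOp_single (r s mu nu : Fin n → K) (i : Fin n) (k : Fin n → ℤ) (c : K) :
    yZOp r s mu nu i (Finsupp.single k c) =
      Finsupp.single (Function.update k i (k i - 1))
        (c * yCoeff (r i) (s i) (mu i) (nu i) (k i)) := by
  rw [yZOp, mkOp_single, smul_smul, Finsupp.smul_single, smul_eq_mul, mul_one, yCoeff]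

theorem rhoZOp_comm (a b a' b' : Fin n → K) (i j : Fin n) :
    rhoZOp a b i ∘ₗ rhoZOp a' b' j = rhoZOp a' b' j ∘ₗ rhoZOp a b i := by
  refine Finsupp.lhom_ext fun k c => ?_
  simp only [LinearMap.comp_apply, rhoZOp_single]
  congr 1; ring

theorem rhoZOp_comp_rhoZInvOp {a b : Fin n → K} {i : Fin n} (ha : a i ≠ 0) (hb : b i ≠ 0) :
    rhoZOp a b i ∘ₗ rhoZInvOp a b i = LinearMap.id := by
  refine Finsupp.lhom_ext fun k c => ?_
  rw [LinearMap.comp_apply, rhoZInvOp_single, rhoZOp_single, inv_mul_cancel_right₀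
    (mul_ne_zero (zpow_ne_zero _ ha) hb), LinearMap.id_apply]

theorem rhoZInvOp_comp_rhoZOp {a b : Fin n → K} {i : Fin n} (ha : a i ≠ 0) (hb : b i ≠ 0) :
    rhoZInvOp a b i ∘ₗ rhoZOp a b i = LinearMap.id := by
  refine Finsupp.lhom_ext fun k c => ?_
  rw [LinearMap.comp_apply, rhoZOp_single, rhoZInvOp_single, mul_inv_cancel_right₀
    (mul_ne_zero (zpow_ne_zero _ ha) hb), LinearMap.id_apply]

theorem rhoZOp_comp_xZOp {a : Fin n → K} {i : Fin n} (ha : a i ≠ 0) (b : Fin n → K)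
    (j : Fin n) :
    rhoZOp a b i ∘ₗ xZOp j = (if i = j then a i else 1) • (xZOp j ∘ₗ rhoZOp a b i) := by
  refine Finsupp.lhom_ext fun k c => ?_
  simp only [LinearMap.comp_apply, LinearMap.smul_apply, rhoZOp_single, xZOp_single,
    Finsupp.smul_single, smul_eq_mul]
  by_cases h : i = j
  · subst h
    rw [Function.update_self, zpow_add_one₀ ha, if_pos rfl]
    congr 1; ring
  · rw [Function.update_of_ne h, if_neg h, one_mul]

theorem rhoZOp_comp_yZOp {a : Fin n → K} {i : Fin n} (ha : a i ≠ 0) (b r s mu nu : Fin n → K)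
    (j : Fin n) :
    rhoZOp a b i ∘ₗ yZOp r s mu nu j
      = (if i = j then a i else 1)⁻¹ • (yZOp r s mu nu j ∘ₗ rhoZOp a b i) := by
  refine Finsupp.lhom_ext fun k c => ?_
  simp only [LinearMap.comp_apply, LinearMap.smul_apply, rhoZOp_single, yZOp_single,
    Finsupp.smul_single, smul_eq_mul]
  by_cases h : i = j
  · subst h
    rw [Function.update_self, zpow_sub_one₀ ha, if_pos rfl]
    field_simp
  · rw [Function.update_of_ne h, if_neg h, inv_one, one_mul]
    congr 1; ring

theorem xZOp_comm (i j : Fin n) : xZOp (K := K) i ∘ₗ xZOp j = xZOp j ∘ₗ xZOp i := by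
  obtain rfl | h := eq_or_ne i j
  · rfl
  refine Finsupp.lhom_ext fun k c => ?_
  simp only [LinearMap.comp_apply, xZOp_single]
  rw [Function.update_of_ne h, Function.update_of_ne h.symm, Function.update_comm h]

theorem yZOp_comm (r s mu nu : Fin n → K) (i j : Fin n) :
    yZOp r s mu nu i ∘ₗ yZOp r s mu nu j = yZOp r s mu nu j ∘ₗ yZOp r s mu nu i := by
  obtain rfl | h := eq_or_ne i j
  · rfl
  refine Finsupp.lhom_ext fun k c => ?_
  simp only [LinearMap.comp_apply, yZOp_single]
  rw [Function.update_of_ne h, Function.update_of_ne h.symm, Function.update_comm h,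
    mul_right_comm]

theorem yZOp_comp_xZOp_of_ne (r s mu nu : Fin n → K) {i j : Fin n} (h : i ≠ j) :
    yZOp r s mu nu i ∘ₗ xZOp j = xZOp j ∘ₗ yZOp r s mu nu i := by
  refine Finsupp.lhom_ext fun k c => ?_
  simp only [LinearMap.comp_apply, yZOp_single, xZOp_single]
  rw [Function.update_of_ne h, Function.update_of_ne h.symm, Function.update_comm h]

theorem yZOp_comp_xZOp_sub_smul_single (r s mu nu : Fin n → K) (i : Fin n) (t : K)
    (k : Fin n → ℤ) (c : K) :
    (yZOp r s mu nu i ∘ₗ xZOp i - t • (xZOp i ∘ₗ yZOp r s mu nu i)) (Finsupp.single k c) =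
      Finsupp.single k (c * (yCoeff (r i) (s i) (mu i) (nu i) (k i + 1)
        - t * yCoeff (r i) (s i) (mu i) (nu i) (k i))) := by
  simp only [LinearMap.sub_apply, LinearMap.comp_apply, LinearMap.smul_apply,
    yZOp_single, xZOp_single, Finsupp.smul_single, smul_eq_mul]
  rw [Function.update_self, Function.update_self, Function.update_idem, Function.update_idem,
    add_sub_cancel_right, sub_add_cancel, Function.update_eq_self, ← Finsupp.single_sub]
  congr 1; ring

theorem yZOp_comp_xZOp_sub_sq_r_smul {r s : Fin n → K} {i : Fin n} (hr : r i ≠ 0)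
    (hs : s i ≠ 0) (hrs : r i ^ 2 ≠ s i ^ 2) (mu nu : Fin n → K) :
    yZOp r s mu nu i ∘ₗ xZOp i - r i ^ 2 • (xZOp i ∘ₗ yZOp r s mu nu i)
      = rhoZOp s nu i ∘ₗ rhoZOp s nu i := by
  refine Finsupp.lhom_ext fun k c => ?_
  rw [yZOp_comp_xZOp_sub_smul_single, yCoeff_add_one_sub hr hs hrs, LinearMap.comp_apply,
    rhoZOp_single, rhoZOp_single, ← mul_assoc]

theorem yZOp_comp_xZOp_sub_sq_s_smul {r s : Fin n → K} {i : Fin n} (hr : r i ≠ 0)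
    (hs : s i ≠ 0) (hrs : r i ^ 2 ≠ s i ^ 2) (mu nu : Fin n → K) :
    yZOp r s mu nu i ∘ₗ xZOp i - s i ^ 2 • (xZOp i ∘ₗ yZOp r s mu nu i)
      = rhoZOp r mu i ∘ₗ rhoZOp r mu i := by
  refine Finsupp.lhom_ext fun k c => ?_
  rw [yZOp_comp_xZOp_sub_smul_single, yCoeff_comm, yCoeff_comm (r i),
    yCoeff_add_one_sub hs hr (Ne.symm hrs), LinearMap.comp_apply, rhoZOp_single,
    rhoZOp_single, ← mul_assoc]

end Operators

theorem stmt10_general {K : Type*} [Field K] (n : ℕ)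
    (r s mu nu : Fin n → K)
    (hr : ∀ i, r i ≠ 0) (hs : ∀ i, s i ≠ 0) (hrs : ∀ i, (r i) ^ 2 ≠ (s i) ^ 2)
    (hmu : ∀ i, mu i ≠ 0) (hnu : ∀ i, nu i ≠ 0) :
    -- (R1)
    (∀ i j : Fin n,
        rhoZOp r mu i ∘ₗ rhoZOp r mu j = rhoZOp r mu j ∘ₗ rhoZOp r mu i ∧
        rhoZOp (K := K) r mu i ∘ₗ rhoZOp s nu j = rhoZOp s nu j ∘ₗ rhoZOp r mu i ∧
        rhoZOp (K := K) s nu i ∘ₗ rhoZOp s nu j = rhoZOp s nu j ∘ₗ rhoZOp s nu i) ∧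
    (∀ i : Fin n,
        rhoZOp (K := K) r mu i ∘ₗ rhoZInvOp r mu i = LinearMap.id ∧
        rhoZInvOp (K := K) r mu i ∘ₗ rhoZOp r mu i = LinearMap.id ∧
        rhoZOp (K := K) s nu i ∘ₗ rhoZInvOp s nu i = LinearMap.id ∧
        rhoZInvOp (K := K) s nu i ∘ₗ rhoZOp s nu i = LinearMap.id) ∧
    -- (R2)
    (∀ i j : Fin n,
        rhoZOp r mu i ∘ₗ xZOp j = (if i = j then r i else 1) • (xZOp j ∘ₗ rhoZOp r mu i) ∧
        rhoZOp r mu i ∘ₗ yZOp r s mu nu j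
          = (if i = j then r i else 1)⁻¹ • (yZOp r s mu nu j ∘ₗ rhoZOp r mu i)) ∧
    -- (R3)
    (∀ i j : Fin n,
        rhoZOp s nu i ∘ₗ xZOp j = (if i = j then s i else 1) • (xZOp j ∘ₗ rhoZOp s nu i) ∧
        rhoZOp s nu i ∘ₗ yZOp r s mu nu j
          = (if i = j then s i else 1)⁻¹ • (yZOp r s mu nu j ∘ₗ rhoZOp s nu i)) ∧
    -- (R4)
    (∀ i j : Fin n,
        xZOp (K := K) (n := n) i ∘ₗ xZOp j = xZOp j ∘ₗ xZOp i ∧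
        yZOp r s mu nu i ∘ₗ yZOp r s mu nu j = yZOp r s mu nu j ∘ₗ yZOp r s mu nu i) ∧
    (∀ i j : Fin n, i ≠ j → yZOp r s mu nu i ∘ₗ xZOp j = xZOp j ∘ₗ yZOp r s mu nu i) ∧
    -- (R5)
    (∀ i : Fin n,
        yZOp r s mu nu i ∘ₗ xZOp i - (r i) ^ 2 • (xZOp i ∘ₗ yZOp r s mu nu i)
          = rhoZOp s nu i ∘ₗ rhoZOp s nu i ∧
        yZOp r s mu nu i ∘ₗ xZOp i - (s i) ^ 2 • (xZOp i ∘ₗ yZOp r s mu nu i)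
          = rhoZOp r mu i ∘ₗ rhoZOp r mu i) :=
  ⟨fun i j => ⟨rhoZOp_comm r mu r mu i j, rhoZOp_comm r mu s nu i j, rhoZOp_comm s nu s nu i j⟩,
    fun i => ⟨rhoZOp_comp_rhoZInvOp (hr i) (hmu i), rhoZInvOp_comp_rhoZOp (hr i) (hmu i),
      rhoZOp_comp_rhoZInvOp (hs i) (hnu i), rhoZInvOp_comp_rhoZOp (hs i) (hnu i)⟩,
    fun i j => ⟨rhoZOp_comp_xZOp (hr i) mu j, rhoZOp_comp_yZOp (hr i) mu r s mu nu j⟩,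
    fun i j => ⟨rhoZOp_comp_xZOp (hs i) nu j, rhoZOp_comp_yZOp (hs i) nu r s mu nu j⟩,
    fun i j => ⟨xZOp_comm i j, yZOp_comm r s mu nu i j⟩,
    fun _ _ h => yZOp_comp_xZOp_of_ne r s mu nu h,
    fun i => ⟨yZOp_comp_xZOp_sub_sq_r_smul (hr i) (hs i) (hrs i) mu nu,
      yZOp_comp_xZOp_sub_sq_s_smul (hr i) (hs i) (hrs i) mu nu⟩⟩

/-- the operators defining `Z(μ,ν)` satisfy the defining relations
(R1)-(R5) of `A_{r,s}(n)`, so `Z(μ,ν)` is an `A_{r,s}(n)`-module. -/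
theorem stmt10 {K : Type*} [Field K] [IsAlgClosed K] (n : ℕ)
    (r s mu nu : Fin n → K)
    (hr : ∀ i, r i ≠ 0) (hs : ∀ i, s i ≠ 0) (hrs : ∀ i, (r i) ^ 2 ≠ (s i) ^ 2)
    (hmu : ∀ i, mu i ≠ 0) (hnu : ∀ i, nu i ≠ 0)
    (hbreak : ∀ i, nu i ≠ r i * (s i)⁻¹ * mu i ∧ nu i ≠ -(r i * (s i)⁻¹ * mu i)) :
    -- (R1)
    (∀ i j : Fin n,
        rhoZOp r mu i ∘ₗ rhoZOp r mu j = rhoZOp r mu j ∘ₗ rhoZOp r mu i ∧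
        rhoZOp (K := K) r mu i ∘ₗ rhoZOp s nu j = rhoZOp s nu j ∘ₗ rhoZOp r mu i ∧
        rhoZOp (K := K) s nu i ∘ₗ rhoZOp s nu j = rhoZOp s nu j ∘ₗ rhoZOp s nu i) ∧
    (∀ i : Fin n,
        rhoZOp (K := K) r mu i ∘ₗ rhoZInvOp r mu i = LinearMap.id ∧
        rhoZInvOp (K := K) r mu i ∘ₗ rhoZOp r mu i = LinearMap.id ∧
        rhoZOp (K := K) s nu i ∘ₗ rhoZInvOp s nu i = LinearMap.id ∧
        rhoZInvOp (K := K) s nu i ∘ₗ rhoZOp s nu i = LinearMap.id) ∧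
    -- (R2)
    (∀ i j : Fin n,
        rhoZOp r mu i ∘ₗ xZOp j = (if i = j then r i else 1) • (xZOp j ∘ₗ rhoZOp r mu i) ∧
        rhoZOp r mu i ∘ₗ yZOp r s mu nu j
          = (if i = j then r i else 1)⁻¹ • (yZOp r s mu nu j ∘ₗ rhoZOp r mu i)) ∧
    -- (R3)
    (∀ i j : Fin n,
        rhoZOp s nu i ∘ₗ xZOp j = (if i = j then s i else 1) • (xZOp j ∘ₗ rhoZOp s nu i) ∧
        rhoZOp s nu i ∘ₗ yZOp r s mu nu j
          = (if i = j then s i else 1)⁻¹ • (yZOp r s mu nu j ∘ₗ rhoZOp s nu i)) ∧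
    -- (R4)
    (∀ i j : Fin n,
        xZOp (K := K) (n := n) i ∘ₗ xZOp j = xZOp j ∘ₗ xZOp i ∧
        yZOp r s mu nu i ∘ₗ yZOp r s mu nu j = yZOp r s mu nu j ∘ₗ yZOp r s mu nu i) ∧
    (∀ i j : Fin n, i ≠ j → yZOp r s mu nu i ∘ₗ xZOp j = xZOp j ∘ₗ yZOp r s mu nu i) ∧
    -- (R5)
    (∀ i : Fin n,
        yZOp r s mu nu i ∘ₗ xZOp i - (r i) ^ 2 • (xZOp i ∘ₗ yZOp r s mu nu i)
          = rhoZOp s nu i ∘ₗ rhoZOp s nu i ∧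
        yZOp r s mu nu i ∘ₗ xZOp i - (s i) ^ 2 • (xZOp i ∘ₗ yZOp r s mu nu i)
          = rhoZOp r mu i ∘ₗ rhoZOp r mu i) :=
  stmt10_general n r s mu nu hr hs hrs hmu hnu
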